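/- Let p ≥ q ≥ 1 and p+q ≤ n−1. Then q(B¹_{n,p,q}) ≤ q(B²_{n,p,q}), with equality if and only if p = q. -/

import Mathlib

open Matrix

/-- Adjacency matrix of a digraph given by the arc relation `E`. -/
def adjMatrix {V : Type} [Fintype V] (E : V → V → Prop) [DecidableRel E] : Matrix V V ℝ :=
  fun i j => if E i j then 1 else 0

/-- Outdegree of a vertex in the digraph `E`. -/
def outdeg {V : Type} [Fintype V] (E : V → V → Prop) [DecidableRel E] (i : V) : ℕ :=
  (Finset.univ.filter (fun j => E i j)).card

/-- Signless Laplacian `Q = D⁺ + A` of the digraph `E`. -/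
def signlessLaplacian {V : Type} [Fintype V] [DecidableEq V] (E : V → V → Prop)
    [DecidableRel E] : Matrix V V ℝ :=
  Matrix.diagonal (fun i => (outdeg E i : ℝ)) + adjMatrix E

/-- Q-index: the spectral radius of the signless Laplacian of the digraph `E`. -/
noncomputable def qIndex {V : Type} [Fintype V] [DecidableEq V] (E : V → V → Prop)
    [DecidableRel E] : ℝ :=
  sSup ((fun z : ℂ => ‖z‖) '' spectrum ℂ ((signlessLaplacian E).map Complex.ofReal))

/-- A digraph is strongly connected if every vertex reaches every vertex by a directed path. -/
def StronglyConnected {V : Type} (E : V → V → Prop) : Prop :=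
  ∀ i j : V, Relation.ReflTransGen E i j

/-- The digraph on `Fin n` (vertex `v_i` is index `i-1`) obtained from the complete bipartite
digraph `K⃗_{p,q}` with parts `{0,…,p-1}` and `{p,…,p+q-1}` by adding the directed path
`s, p+q, p+q+1, …, n-1, t`. Taking `(s,t)` to be `(0, p-1)`, `(p, p+q-1)`, `(0,0)`, `(p,p)`,
`(0,p)`, `(p,0)` yields `B¹`, `B²`, `B³`, `B⁴`, `B⁵`, `B⁶` respectively. -/
def Bgen (n p q s t : ℕ) : Fin n → Fin n → Prop := fun i j =>
  (i.val < p ∧ p ≤ j.val ∧ j.val < p + q) ∨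
  (j.val < p ∧ p ≤ i.val ∧ i.val < p + q) ∨
  (i.val = s ∧ j.val = p + q) ∨
  (p + q ≤ i.val ∧ j.val = i.val + 1) ∨
  (i.val = n - 1 ∧ j.val = t)

instance (n p q s t : ℕ) : DecidableRel (Bgen n p q s t) := fun i j => by
  unfold Bgen; infer_instance

/-!
Relabelling the two parts of the bipartite digraph turns `B²_{n,p,q}` into `B¹_{n,q,p}`, so it
suffices to compare `q(B¹_{n,p,q})` with `q(B¹_{n,q,p})`. For `B¹_{n,a,b}` one writes down, for
every `r > a + b`, a positive vector satisfying all row equations `Qy = ry` except the one at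
`v₁`, which becomes a scalar secular equation in `r`. A positive eigenvector of a nonnegative
matrix belongs to its spectral radius, so every root `r > a + b` of the secular equation is the
Q-index. The secular function of `(p, q)` changes sign on `(p + q, p + q + 2)`, and when `q < p`
the secular function of `(q, p)` is negative at that root, so its own root lies strictly beyond.
-/

namespace Matrix

variable {ι : Type*} [Fintype ι] [DecidableEq ι]

theorem mem_spectrum_iff_exists_mulVec_eq_smul {K : Type*} [Field K] (A : Matrix ι ι K) (μ : K) :
    μ ∈ spectrum K A ↔ ∃ v ≠ 0, A *ᵥ v = μ • v := by
  rw [← spectrum_toLin', ← Module.End.hasEigenvalue_iff_mem_spectrum]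
  constructor
  · intro h
    simpa [Module.End.hasEigenvector_iff, and_comm] using h.exists_hasEigenvector
  · rintro ⟨v, hv, h⟩
    exact Module.End.hasEigenvalue_of_hasEigenvector
      (Module.End.hasEigenvector_iff.2 ⟨Module.End.mem_eigenspace_iff.2 h, hv⟩)

theorem ofReal_mem_spectrum_map_of_mulVec_eq_smul (A : Matrix ι ι ℝ) {y : ι → ℝ} {r : ℝ}
    (hy : y ≠ 0) (h : A *ᵥ y = r • y) : (r : ℂ) ∈ spectrum ℂ (A.map Complex.ofReal) := by
  refine (mem_spectrum_iff_exists_mulVec_eq_smul _ _).2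
    ⟨Complex.ofRealHom ∘ y, fun h0 => hy (funext fun i => by simpa using congrFun h0 i), ?_⟩
  funext i
  have := RingHom.map_mulVec Complex.ofRealHom A y i
  rw [h] at this
  exact this.symm.trans (by simp)

theorem norm_le_of_mem_spectrum_map_of_mulVec_eq_smul {A : Matrix ι ι ℝ} {y : ι → ℝ} {r : ℝ}
    (hA : ∀ i j, 0 ≤ A i j) (hy : ∀ i, 0 < y i) (h : A *ᵥ y = r • y) {μ : ℂ}
    (hμ : μ ∈ spectrum ℂ (A.map Complex.ofReal)) : ‖μ‖ ≤ r := by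
  obtain ⟨v, hv, hμv⟩ := (mem_spectrum_iff_exists_mulVec_eq_smul _ _).1 hμ
  obtain ⟨k, hk⟩ := Function.ne_iff.1 hv
  -- compare `v` with `y` at a coordinate where `‖v j‖ / y j` is largest
  obtain ⟨i, -, hi⟩ := Finset.exists_max_image Finset.univ (fun j => ‖v j‖ / y j) ⟨k, by simp⟩
  set c := ‖v i‖ / y i
  have hv_le : ∀ j, ‖v j‖ ≤ c * y j := fun j =>
    (div_le_iff₀ (hy j)).1 (hi j (Finset.mem_univ j))
  have hc : 0 < c := lt_of_lt_of_le (div_pos (norm_pos_iff.2 hk) (hy k)) (hi k (by simp))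
  have hvi : 0 < ‖v i‖ := by simpa [c, div_pos_iff_of_pos_right (hy i)] using hc
  have hrow : ∑ j, A i j * y j = r * y i := by simpa [mulVec, dotProduct] using congrFun h i
  refine le_of_mul_le_mul_right ?_ hvi
  calc ‖μ‖ * ‖v i‖ = ‖∑ j, (A i j : ℂ) * v j‖ := by
        rw [← norm_mul, ← smul_eq_mul, ← Pi.smul_apply, ← hμv]; rfl
    _ ≤ ∑ j, A i j * ‖v j‖ := by
        refine (norm_sum_le _ _).trans (Finset.sum_le_sum fun j _ => ?_)
        rw [norm_mul, Complex.norm_real, Real.norm_of_nonneg (hA i j)]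
    _ ≤ ∑ j, A i j * (c * y j) :=
        Finset.sum_le_sum fun j _ => mul_le_mul_of_nonneg_left (hv_le j) (hA i j)
    _ = c * (r * y i) := by
        rw [← hrow, Finset.mul_sum]
        exact Finset.sum_congr rfl fun j _ => by ring
    _ = r * ‖v i‖ := by
        simp only [c]
        field_simp [(hy i).ne']

theorem sSup_norm_spectrum_map_eq_of_mulVec_eq_smul [Nonempty ι] {A : Matrix ι ι ℝ}
    {y : ι → ℝ} {r : ℝ} (hA : ∀ i j, 0 ≤ A i j) (hy : ∀ i, 0 < y i) (hr : 0 ≤ r)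
    (h : A *ᵥ y = r • y) :
    sSup ((fun z : ℂ => ‖z‖) '' spectrum ℂ (A.map Complex.ofReal)) = r := by
  have hy0 : y ≠ 0 := fun h0 => (hy (Classical.arbitrary ι)).ne' (congrFun h0 _)
  have hub : ∀ x ∈ (fun z : ℂ => ‖z‖) '' spectrum ℂ (A.map Complex.ofReal), x ≤ r := by
    rintro _ ⟨μ, hμ, rfl⟩
    exact norm_le_of_mem_spectrum_map_of_mulVec_eq_smul hA hy h hμ
  refine IsGreatest.csSup_eq ⟨⟨r, ofReal_mem_spectrum_map_of_mulVec_eq_smul A hy0 h, ?_⟩, hub⟩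
  simp [abs_of_nonneg hr]

end Matrix

section Digraph

variable {V W : Type} [Fintype V] [Fintype W]

theorem outdeg_congr {E : V → V → Prop} {E' : W → W → Prop} [DecidableRel E] [DecidableRel E']
    (σ : W ≃ V) (h : ∀ i j, E' i j ↔ E (σ i) (σ j)) (i : W) : outdeg E' i = outdeg E (σ i) :=
  Finset.card_equiv σ fun j => by simp [h]

variable [DecidableEq V] [DecidableEq W]

theorem signlessLaplacian_nonneg (E : V → V → Prop) [DecidableRel E] (i j : V) :
    0 ≤ signlessLaplacian E i j := by
  simp only [signlessLaplacian, Matrix.add_apply, adjMatrix, Matrix.diagonal_apply]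
  split_ifs <;> positivity

theorem signlessLaplacian_mulVec_apply (E : V → V → Prop) [DecidableRel E] (y : V → ℝ) (i : V) :
    (signlessLaplacian E *ᵥ y) i = ∑ j ∈ Finset.univ.filter (E i), (y i + y j) := by
  rw [signlessLaplacian, Matrix.add_mulVec, Pi.add_apply, Matrix.mulVec_diagonal,
    Finset.sum_add_distrib, Finset.sum_const, nsmul_eq_mul, outdeg]
  simp [adjMatrix, Matrix.mulVec, dotProduct, Finset.sum_filter]

theorem qIndex_eq_of_mulVec_eq_smul [Nonempty V] {E : V → V → Prop} [DecidableRel E]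
    {y : V → ℝ} {r : ℝ} (hy : ∀ i, 0 < y i) (hr : 0 ≤ r)
    (h : signlessLaplacian E *ᵥ y = r • y) : qIndex E = r :=
  Matrix.sSup_norm_spectrum_map_eq_of_mulVec_eq_smul (signlessLaplacian_nonneg E) hy hr h

theorem signlessLaplacian_congr {E : V → V → Prop} {E' : W → W → Prop} [DecidableRel E]
    [DecidableRel E'] (σ : W ≃ V) (h : ∀ i j, E' i j ↔ E (σ i) (σ j)) :
    signlessLaplacian E' = (signlessLaplacian E).submatrix σ σ := by
  ext i j
  simp [signlessLaplacian, adjMatrix, Matrix.diagonal_apply, outdeg_congr σ h, h]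

theorem qIndex_congr {E : V → V → Prop} {E' : W → W → Prop} [DecidableRel E] [DecidableRel E']
    (σ : W ≃ V) (h : ∀ i j, E' i j ↔ E (σ i) (σ j)) : qIndex E' = qIndex E := by
  have : (signlessLaplacian E').map Complex.ofReal =
      Matrix.reindexAlgEquiv ℂ ℂ σ.symm ((signlessLaplacian E).map Complex.ofReal) := by
    rw [signlessLaplacian_congr σ h]
    rfl
  rw [qIndex, qIndex, this, AlgEquiv.spectrum_eq]

end Digraph

def swapParts (p q i : ℕ) : ℕ := if i < p then i + q else if i < p + q then i - p else i

theorem swapParts_swapParts (p q i : ℕ) : swapParts q p (swapParts p q i) = i := by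
  unfold swapParts; split_ifs <;> omega

theorem swapParts_lt {p q n i : ℕ} (h : p + q ≤ n) (hi : i < n) : swapParts p q i < n := by
  unfold swapParts; split_ifs <;> omega

def swapPartsEquiv (n p q : ℕ) (h : p + q ≤ n) : Fin n ≃ Fin n where
  toFun i := ⟨swapParts p q i, swapParts_lt h i.isLt⟩
  invFun i := ⟨swapParts q p i, swapParts_lt (by omega) i.isLt⟩
  left_inv i := Fin.ext (swapParts_swapParts p q i)
  right_inv i := Fin.ext (swapParts_swapParts q p i)

theorem qIndex_B2_eq_qIndex_B1_swap {n p q : ℕ} (hq : 1 ≤ q) (hn : p + q < n) :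
    qIndex (Bgen n p q p (p + q - 1)) = qIndex (Bgen n q p 0 (q - 1)) := by
  refine qIndex_congr (swapPartsEquiv n p q hn.le) fun i j => ?_
  have := i.isLt
  have := j.isLt
  simp only [Bgen, swapPartsEquiv, Equiv.coe_fn_mk, swapParts]
  split_ifs <;> omega

theorem Fin.sum_filter_val_mem {n : ℕ} {M : Type*} [AddCommMonoid M] {N : Finset ℕ}
    (hN : ∀ k ∈ N, k < n) (f : ℕ → M) :
    ∑ j ∈ Finset.univ.filter (fun j : Fin n => j.val ∈ N), f j = ∑ k ∈ N, f k := by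
  rw [Finset.sum_filter, Fin.sum_univ_eq_sum_range (fun k => if k ∈ N then f k else 0),
    ← Finset.sum_filter, Finset.filter_mem_eq_inter,
    Finset.inter_eq_right.2 fun k hk => Finset.mem_range.2 (hN k hk)]

theorem signlessLaplacian_mulVec_apply_eq_sum {n : ℕ} {E : Fin n → Fin n → Prop}
    [DecidableRel E] (Y : ℕ → ℝ) {i : Fin n} {N : Finset ℕ} (hN : ∀ k ∈ N, k < n)
    (hE : ∀ j, E i j ↔ j.val ∈ N) :
    (signlessLaplacian E *ᵥ fun j => Y j) i = ∑ k ∈ N, (Y i + Y k) := by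
  rw [signlessLaplacian_mulVec_apply, Finset.filter_congr fun j _ => hE j,
    Fin.sum_filter_val_mem hN (fun k => Y i + Y k)]

namespace B1

variable {n a b m p q : ℕ} {r : ℝ}

noncomputable def partWeight (b : ℕ) (r : ℝ) : ℝ := b / (r - b)

noncomputable def hubWeight (a b : ℕ) (r : ℝ) : ℝ := r - a - (a - 1) * partWeight b r

-- The entry of the Perron vector at `v_a`, which the end of the path points to; `v_a = v₁` when
-- `a = 1`.
noncomputable def returnWeight (a b : ℕ) (r : ℝ) : ℝ :=
  if a = 1 then hubWeight a b r else partWeight b r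

-- The positive eigenvector of `Q(B¹_{n,a,b})` in the vertex order of `Bgen`: `v₁`, the rest of
-- `V_a`, then `V_b` (normalised to `1`), then the path, along which each entry is `r - 1` times
-- the next one since path vertices have outdegree `1`.
noncomputable def perronVector (n a b : ℕ) (r : ℝ) (k : ℕ) : ℝ :=
  if k = 0 then hubWeight a b r else if k < a then partWeight b r else if k < a + b then 1
  else (r - 1)⁻¹ ^ (n - k) * returnWeight a b r

-- The row of `Q y = r y` at `v₁` for `y = perronVector n a b r`, where `m = n - a - b` is the
-- number of path vertices; every other row holds for all `r > a + b`.
noncomputable def secular (a b m : ℕ) (r : ℝ) : ℝ :=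
  (r - b - 1) * hubWeight a b r - b - (r - 1)⁻¹ ^ m * returnWeight a b r

theorem partWeight_pos (hb : 1 ≤ b) (hr : (b : ℝ) < r) : 0 < partWeight b r :=
  div_pos (by exact_mod_cast hb) (sub_pos.2 hr)

theorem partWeight_mul_sub (hr : (b : ℝ) < r) : partWeight b r * (r - b) = b :=
  div_mul_cancel₀ _ (sub_pos.2 hr).ne'

theorem hubWeight_pos (hr : (a : ℝ) + b < r) : 0 < hubWeight a b r := by
  have hrb : (b : ℝ) < r := by linarith [(a.cast_nonneg : (0 : ℝ) ≤ a)]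
  have h := partWeight_mul_sub hrb
  have : 0 < hubWeight a b r * (r - b) := by
    rw [hubWeight, sub_mul, mul_assoc, h]
    nlinarith [(a.cast_nonneg : (0 : ℝ) ≤ a), (b.cast_nonneg : (0 : ℝ) ≤ b)]
  exact pos_of_mul_pos_left this (sub_pos.2 hrb).le

theorem returnWeight_pos (hb : 1 ≤ b) (hr : (a : ℝ) + b < r) : 0 < returnWeight a b r := by
  unfold returnWeight
  split_ifs
  · exact hubWeight_pos hr
  · exact partWeight_pos hb (by linarith [(a.cast_nonneg : (0 : ℝ) ≤ a)])

theorem perronVector_pos (hb : 1 ≤ b) (hr : (a : ℝ) + b < r) (k : ℕ) :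
    0 < perronVector n a b r k := by
  have hr1 : 0 < (r - 1)⁻¹ := inv_pos.2 (by linarith [(a.cast_nonneg : (0 : ℝ) ≤ a),
    (show (1 : ℝ) ≤ b by exact_mod_cast hb)])
  unfold perronVector
  split_ifs
  · exact hubWeight_pos hr
  · exact partWeight_pos hb (by linarith [(a.cast_nonneg : (0 : ℝ) ≤ a)])
  · exact one_pos
  · exact mul_pos (pow_pos hr1 _) (returnWeight_pos hb hr)

theorem perronVector_zero : perronVector n a b r 0 = hubWeight a b r := if_pos rfl

theorem perronVector_of_pos_of_lt {k : ℕ} (h0 : 0 < k) (hk : k < a) :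
    perronVector n a b r k = partWeight b r := by
  rw [perronVector, if_neg h0.ne', if_pos hk]

theorem perronVector_of_le_of_lt (ha : 1 ≤ a) {k : ℕ} (hak : a ≤ k) (hk : k < a + b) :
    perronVector n a b r k = 1 := by
  rw [perronVector, if_neg (by omega), if_neg (by omega), if_pos hk]

theorem perronVector_of_le (ha : 1 ≤ a) {k : ℕ} (hk : a + b ≤ k) :
    perronVector n a b r k = (r - 1)⁻¹ ^ (n - k) * returnWeight a b r := by
  rw [perronVector, if_neg (by omega), if_neg (by omega), if_neg (by omega)]

theorem perronVector_sub_one (ha : 1 ≤ a) : perronVector n a b r (a - 1) = returnWeight a b r := by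
  rcases ha.eq_or_lt with rfl | ha
  · simp [perronVector, returnWeight]
  · rw [perronVector_of_pos_of_lt (by omega) (by omega), returnWeight, if_neg ha.ne']

theorem mulVec_perronVector_apply_of_lt (ha : 1 ≤ a) (hn : a + b < n)
    (hr : (a : ℝ) + b < r) (hroot : secular a b (n - a - b) r = 0) {i : Fin n}
    (hi : i.val < a + b) :
    (signlessLaplacian (Bgen n a b 0 (a - 1)) *ᵥ fun j : Fin n => perronVector n a b r j) i =
      r * perronVector n a b r i := by
  have hrb : (b : ℝ) < r := by linarith [(a.cast_nonneg : (0 : ℝ) ≤ a)]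
  rcases (by omega : i.val = 0 ∨ (0 < i.val ∧ i.val < a) ∨ a ≤ i.val) with
    h0 | ⟨h0, hia⟩ | hai
  · rw [signlessLaplacian_mulVec_apply_eq_sum _ (N := Finset.Ico a (a + b + 1))
      (fun k hk => by simp at hk; omega) (fun j => by simp [Bgen]; omega),
      Finset.sum_Ico_succ_top (by omega), h0, perronVector_zero,
      Finset.sum_congr rfl fun k hk => by
        rw [perronVector_of_le_of_lt ha (Finset.mem_Ico.1 hk).1 (Finset.mem_Ico.1 hk).2],
      perronVector_of_le ha le_rfl, Finset.sum_const, Nat.card_Ico, Nat.add_sub_cancel_left,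
      nsmul_eq_mul, ← Nat.sub_sub]
    unfold secular at hroot
    linear_combination -hroot
  · rw [signlessLaplacian_mulVec_apply_eq_sum _ (N := Finset.Ico a (a + b))
      (fun k hk => by simp at hk; omega) (fun j => by simp [Bgen]; omega),
      Finset.sum_congr rfl fun k hk => by
        rw [perronVector_of_le_of_lt ha (Finset.mem_Ico.1 hk).1 (Finset.mem_Ico.1 hk).2],
      perronVector_of_pos_of_lt h0 hia, Finset.sum_const, Nat.card_Ico, Nat.add_sub_cancel_left,
      nsmul_eq_mul]
    linear_combination -partWeight_mul_sub hrb
  · rw [signlessLaplacian_mulVec_apply_eq_sum _ (N := Finset.range a)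
      (fun k hk => by simp at hk; omega) (fun j => by simp [Bgen]; omega),
      Finset.range_eq_Ico, Finset.sum_eq_sum_Ico_succ_bot (by omega),
      Finset.sum_congr rfl fun k hk => by
        rw [perronVector_of_pos_of_lt (by simp at hk; omega) (Finset.mem_Ico.1 hk).2],
      perronVector_of_le_of_lt ha hai hi, perronVector_zero, Finset.sum_const, Nat.card_Ico,
      nsmul_eq_mul, Nat.cast_sub ha]
    rw [hubWeight]
    ring

theorem mulVec_perronVector_apply_of_le (ha : 1 ≤ a) (hb : 1 ≤ b) (hr : (a : ℝ) + b < r)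
    {i : Fin n} (hi : a + b ≤ i.val) :
    (signlessLaplacian (Bgen n a b 0 (a - 1)) *ᵥ fun j : Fin n => perronVector n a b r j) i =
      r * perronVector n a b r i := by
  have hr1 : (r - 1)⁻¹ * (r - 1) = 1 :=
    inv_mul_cancel₀ (by linarith [(show (1 : ℝ) ≤ a by exact_mod_cast ha),
      (show (1 : ℝ) ≤ b by exact_mod_cast hb)])
  have := i.isLt
  rcases (by omega : i.val + 1 < n ∨ i.val = n - 1) with hin | hlast
  · rw [signlessLaplacian_mulVec_apply_eq_sum _ (N := {i.val + 1})
      (fun k hk => by simp at hk; omega) (fun j => by simp [Bgen]; omega),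
      Finset.sum_singleton, perronVector_of_le ha hi, perronVector_of_le ha (by omega),
      show n - i.val = n - (i.val + 1) + 1 by omega, pow_succ]
    linear_combination (-((r - 1)⁻¹ ^ (n - (i.val + 1)) * returnWeight a b r)) * hr1
  · rw [signlessLaplacian_mulVec_apply_eq_sum _ (N := {a - 1})
      (fun k hk => by simp at hk; omega) (fun j => by simp [Bgen]; omega),
      Finset.sum_singleton, perronVector_of_le ha (by omega), perronVector_sub_one ha, hlast,
      show n - (n - 1) = 1 by omega, pow_one]
    linear_combination (-returnWeight a b r) * hr1

theorem mulVec_perronVector (ha : 1 ≤ a) (hb : 1 ≤ b) (hn : a + b < n)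
    (hr : (a : ℝ) + b < r) (hroot : secular a b (n - a - b) r = 0) :
    signlessLaplacian (Bgen n a b 0 (a - 1)) *ᵥ (fun j : Fin n => perronVector n a b r j) =
      r • fun j : Fin n => perronVector n a b r j := by
  funext i
  rw [Pi.smul_apply, smul_eq_mul]
  rcases lt_or_ge i.val (a + b) with hi | hi
  · exact mulVec_perronVector_apply_of_lt ha hn hr hroot hi
  · exact mulVec_perronVector_apply_of_le ha hb hr hi

theorem qIndex_eq_of_secular_eq_zero (ha : 1 ≤ a) (hb : 1 ≤ b) (hn : a + b < n)
    (hr : (a : ℝ) + b < r) (hroot : secular a b (n - a - b) r = 0) :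
    qIndex (Bgen n a b 0 (a - 1)) = r :=
  haveI : Nonempty (Fin n) := ⟨⟨0, by omega⟩⟩
  qIndex_eq_of_mulVec_eq_smul (fun i => perronVector_pos (n := n) hb hr i)
    (by linarith [(a.cast_nonneg : (0 : ℝ) ≤ a), (b.cast_nonneg : (0 : ℝ) ≤ b)])
    (mulVec_perronVector ha hb hn hr hroot)

theorem secular_of_ne_one (ha : a ≠ 1) :
    secular a b m r = (r - b - 1) * (r - a - (a - 1) * partWeight b r) - b
      - (r - 1)⁻¹ ^ m * partWeight b r := by
  rw [secular, hubWeight, returnWeight, if_neg ha]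

theorem secular_one : secular 1 b m r = (r - b - 1) * (r - 1) - b - (r - 1)⁻¹ ^ m * (r - 1) := by
  simp [secular, hubWeight, returnWeight]

theorem secular_add_neg (ha : 2 ≤ a) (hb : 1 ≤ b) : secular a b m (a + b) < 0 := by
  have ha' : (2 : ℝ) ≤ a := by exact_mod_cast ha
  have hb' : (1 : ℝ) ≤ b := by exact_mod_cast hb
  have hX : 0 < ((a + b : ℝ) - 1)⁻¹ ^ m := pow_pos (inv_pos.2 (by linarith)) m
  -- at `r = a + b` both weights equal `b / a`
  have : secular a b m (a + b) = -(b / a) * (1 + ((a + b : ℝ) - 1)⁻¹ ^ m) := by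
    rw [secular_of_ne_one (by omega), partWeight, add_sub_cancel_right]
    field_simp
    ring
  rw [this]
  exact mul_neg_of_neg_of_pos (neg_neg_of_pos (by positivity)) (by linarith)

theorem returnWeight_le_hubWeight (hr : (a : ℝ) + b < r) :
    returnWeight a b r ≤ hubWeight a b r := by
  unfold returnWeight
  split_ifs
  · exact le_rfl
  have hrb : (b : ℝ) < r := by linarith [(a.cast_nonneg : (0 : ℝ) ≤ a)]
  have h := partWeight_mul_sub hrb
  have : a * partWeight b r * (r - b) ≤ (r - a) * (r - b) := by
    rw [mul_assoc, h]
    nlinarith [(a.cast_nonneg : (0 : ℝ) ≤ a), (b.cast_nonneg : (0 : ℝ) ≤ b)]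
  have := le_of_mul_le_mul_right this (sub_pos.2 hrb)
  rw [hubWeight]
  linarith

theorem secular_add_add_two_pos (ha : 1 ≤ a) (hb : 1 ≤ b) : 0 < secular a b m (a + b + 2) := by
  have ha' : (1 : ℝ) ≤ a := by exact_mod_cast ha
  have hb' : (1 : ℝ) ≤ b := by exact_mod_cast hb
  set X := ((a + b + 2 : ℝ) - 1)⁻¹ ^ m
  have hd : (1 : ℝ) ≤ a + b + 2 - 1 := by linarith
  have hX0 : 0 ≤ X := pow_nonneg (inv_nonneg.2 (by linarith)) m
  have hX1 : X ≤ 1 := pow_le_one₀ (inv_nonneg.2 (by linarith)) (inv_le_one_of_one_le₀ hd)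
  have hT := returnWeight_le_hubWeight (a := a) (b := b) (r := a + b + 2) (by linarith)
  have hH : hubWeight a b (a + b + 2) * (a + 2) = 3 * b + 2 * a + 4 := by
    have h := partWeight_mul_sub (b := b) (r := a + b + 2) (by linarith)
    rw [hubWeight]
    linear_combination (1 - (a : ℝ)) * h
  rw [secular]
  nlinarith [mul_le_mul_of_nonneg_left hT hX0]

theorem continuousOn_secular : ContinuousOn (secular a b m) (Set.Ioi (b + 1)) := by
  have hb : ∀ r ∈ Set.Ioi ((b : ℝ) + 1), r - b ≠ 0 := fun r hr => by
    simp only [Set.mem_Ioi] at hr; linarith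
  have h1 : ∀ r ∈ Set.Ioi ((b : ℝ) + 1), r - 1 ≠ 0 := fun r hr => by
    simp only [Set.mem_Ioi] at hr; linarith [(b.cast_nonneg : (0 : ℝ) ≤ b)]
  unfold secular returnWeight hubWeight partWeight
  split_ifs <;> fun_prop (disch := assumption)

theorem exists_secular_eq_zero {lo hi : ℝ} (hlo : (q : ℝ) + 1 < lo) (hle : lo ≤ hi)
    (hneg : secular p q m lo < 0) (hpos : 0 < secular p q m hi) :
    ∃ r ∈ Set.Ioo lo hi, secular p q m r = 0 :=
  intermediate_value_Ioo hle
    (continuousOn_secular.mono fun _ hr => lt_of_lt_of_le hlo hr.1) ⟨hneg, hpos⟩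

theorem secular_swap_identity (hp : p ≠ 1) (hq : q ≠ 1) (hrp : (p : ℝ) < r)
    (hrq : (q : ℝ) < r) :
    (r - p) * secular q p m r =
      (r - q) * secular p q m r + (p - q) * (r * (p + q - r) - 1 - (r - 1)⁻¹ ^ m) := by
  rw [secular_of_ne_one hp, secular_of_ne_one hq]
  linear_combination ((r - q - 1) * (p - 1) + (r - 1)⁻¹ ^ m) * partWeight_mul_sub hrq
    - ((r - p - 1) * (q - 1) + (r - 1)⁻¹ ^ m) * partWeight_mul_sub hrp

theorem secular_one_neg (hp : 2 ≤ p) (hr : (p : ℝ) + 1 < r) (h : secular p 1 m r = 0) :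
    secular 1 p m r < 0 := by
  have hp' : (2 : ℝ) ≤ p := by exact_mod_cast hp
  set X := (r - 1)⁻¹ ^ m
  have hX : 0 < X := pow_pos (inv_pos.2 (by linarith)) m
  have hF : (r - 2) * ((r - p) * (r - 1) - (p - 1)) - (r - 1) - X = 0 := by
    rw [secular_of_ne_one (by omega)] at h
    linear_combination (r - 1) * h
      + ((r - 2) * (p - 1) + X) * partWeight_mul_sub (b := 1) (r := r) (by push_cast; linarith)
  have h1 : p < (r - 1) * (r - p) := by nlinarith
  have h2 : 0 ≤ (r - 3) * ((r - 1) * (r - p) - p) := by nlinarith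
  rw [secular_one]
  nlinarith

theorem secular_swap_neg (hq : 1 ≤ q) (hqp : q < p) (hr : (p : ℝ) + q < r)
    (h : secular p q m r = 0) : secular q p m r < 0 := by
  have hq' : (1 : ℝ) ≤ q := by exact_mod_cast hq
  have hqp' : (q : ℝ) < p := by exact_mod_cast hqp
  rcases hq.eq_or_lt with rfl | hq2
  · exact secular_one_neg (by omega) (by exact_mod_cast hr) h
  have key := secular_swap_identity (p := p) (q := q) (m := m) (r := r) (by omega) hq2.ne'
    (by linarith) (by linarith)
  rw [h, mul_zero, zero_add] at key
  have hX : 0 < (r - 1)⁻¹ ^ m := pow_pos (inv_pos.2 (by linarith)) m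
  have : (r - p) * secular q p m r < 0 := by
    rw [key]
    exact mul_neg_of_pos_of_neg (by linarith) (by nlinarith)
  exact neg_of_mul_neg_right this (by linarith)

end B1

/-- For `p ≥ q ≥ 1` and `p + q ≤ n - 1`, `q(B¹_{n,p,q}) ≤ q(B²_{n,p,q})`, with equality if and
only if `p = q`. -/
theorem stmt13 (n p q : ℕ) (hq : 1 ≤ q) (hqp : q ≤ p) (hn : p + q + 1 ≤ n) :
    qIndex (Bgen n p q 0 (p - 1)) ≤ qIndex (Bgen n p q p (p + q - 1)) ∧
      (qIndex (Bgen n p q 0 (p - 1)) = qIndex (Bgen n p q p (p + q - 1)) ↔ p = q) := by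
  rw [qIndex_B2_eq_qIndex_B1_swap hq hn]
  rcases hqp.eq_or_lt with rfl | hlt
  · simp
  have hq' : (1 : ℝ) ≤ q := by exact_mod_cast hq
  have hlt' : (q : ℝ) < p := by exact_mod_cast hlt
  obtain ⟨r₁, ⟨hr₁, hr₁'⟩, hroot₁⟩ := B1.exists_secular_eq_zero (m := n - p - q) (by linarith)
    (by linarith) (B1.secular_add_neg (by omega) hq) (B1.secular_add_add_two_pos (by omega) hq)
  obtain ⟨r₂, ⟨hr₁₂, -⟩, hroot₂⟩ := B1.exists_secular_eq_zero (p := q) (m := n - p - q)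
    (by linarith) (by linarith) (B1.secular_swap_neg hq hlt hr₁ hroot₁)
    (B1.secular_add_add_two_pos hq (by omega))
  rw [B1.qIndex_eq_of_secular_eq_zero (by omega) hq (by omega) hr₁ hroot₁,
    B1.qIndex_eq_of_secular_eq_zero hq (by omega) (by omega) (by linarith)
      (by rwa [Nat.sub_right_comm])]
  exact ⟨hr₁₂.le, iff_of_false hr₁₂.ne hlt.ne'⟩
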